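/- arXiv:2208.14906 — 8 statements merged into one kernel-verified Lean document; each statement's English description precedes it below -/
import Mathlib

section
/- Let c : ℝ → ℝ satisfy c(x) ≠ 0 for all x ∈ [0,1] and the symmetry condition c(x) = c(1−x) for all x ∈ [0,1], let ω ∈ ℝ, and let S = !![1, 0; 0, −1]. Suppose T is a 2×2 real matrix such that every u : ℝ → ℝ that is differentiable on [0,1] with differentiable derivative there and satisfies (deriv (deriv u)) x = −(ω²/c(x)²)·u(x) on [0,1] obeys the transfer relation (u(1), (deriv u)(1)) = T.mulVec (u(0), (deriv u)(0)). Suppose moreover that for every (a,b) ∈ ℝ² there exists such a solution u with u(0) = a and (deriv u)(0) = b. Then T · S · T = S; in particular T is invertible and T⁻¹ = S · T · S. -/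
/-- A solution of the 1D Helmholtz equation u'' + (ω²/c²)u = 0 on [0,1]. -/
def IsHelmholtzSolution (c : ℝ → ℝ) (ω : ℝ) (u : ℝ → ℝ) : Prop :=
  (∀ x ∈ Set.Icc (0 : ℝ) 1, DifferentiableAt ℝ u x) ∧
  (∀ x ∈ Set.Icc (0 : ℝ) 1, DifferentiableAt ℝ (deriv u) x) ∧
  (∀ x ∈ Set.Icc (0 : ℝ) 1, deriv (deriv u) x = -(ω ^ 2 / (c x) ^ 2) * u x)

/-- The reflected function of a Helmholtz solution in a symmetric medium
is again a Helmholtz solution. -/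
lemma reflect_solution (c : ℝ → ℝ) (ω : ℝ) (u : ℝ → ℝ)
    (hsym : ∀ x ∈ Set.Icc (0 : ℝ) 1, c x = c (1 - x))
    (hu : IsHelmholtzSolution c ω u) :
    IsHelmholtzSolution c ω (fun x => u (1 - x)) := by
  obtain ⟨h1, h2, h3⟩ := hu
  have hmem : ∀ x ∈ Set.Icc (0 : ℝ) 1, (1 - x) ∈ Set.Icc (0 : ℝ) 1 := by
    intro x hx
    exact ⟨by linarith [hx.2], by linarith [hx.1]⟩
  have hd1 : ∀ x ∈ Set.Icc (0 : ℝ) 1, DifferentiableAt ℝ (fun x => u (1 - x)) x := by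
    intro x hx
    exact (h1 _ (hmem x hx)).comp x ((differentiableAt_const (1:ℝ)).sub differentiableAt_id)
  have hderiv : deriv (fun x => u (1 - x)) = fun x => -deriv u (1 - x) :=
    funext fun x => deriv_comp_const_sub u 1 x
  refine ⟨hd1, ?_, ?_⟩
  · intro x hx
    rw [hderiv]
    exact (((h2 _ (hmem x hx)).comp x
      ((differentiableAt_const (1:ℝ)).sub differentiableAt_id)).neg)
  · intro x hx
    rw [hderiv]
    have : deriv (fun x => -deriv u (1 - x)) x = deriv (deriv u) (1 - x) := by
      rw [deriv.fun_neg, deriv_comp_const_sub, neg_neg]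
    rw [this, h3 _ (hmem x hx), ← hsym x hx]

/-- Lemma 2.8 (symmetric units): the transfer matrix T of a symmetric medium
satisfies T·S·T = S, hence T is invertible with T⁻¹ = S·T·S,
where S = diag(1,−1). -/
theorem symmetric_unit_transfer
    (c : ℝ → ℝ) (hc : ∀ x ∈ Set.Icc (0 : ℝ) 1, c x ≠ 0)
    (hsym : ∀ x ∈ Set.Icc (0 : ℝ) 1, c x = c (1 - x))
    (ω : ℝ) (T : Matrix (Fin 2) (Fin 2) ℝ)
    (hT : ∀ u : ℝ → ℝ, IsHelmholtzSolution c ω u →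
      ![u 1, deriv u 1] = T.mulVec ![u 0, deriv u 0])
    (hex : ∀ a b : ℝ, ∃ u : ℝ → ℝ, IsHelmholtzSolution c ω u ∧
      u 0 = a ∧ deriv u 0 = b) :
    T * !![(1 : ℝ), 0; 0, -1] * T = !![(1 : ℝ), 0; 0, -1] ∧
      IsUnit T.det ∧
      T⁻¹ = !![(1 : ℝ), 0; 0, -1] * T * !![(1 : ℝ), 0; 0, -1] := by
  set S : Matrix (Fin 2) (Fin 2) ℝ := !![(1 : ℝ), 0; 0, -1] with hS
  have hSvec : ∀ a b : ℝ, S.mulVec ![a, b] = ![a, -b] := by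
    intro a b
    funext i
    fin_cases i <;>
      simp [hS, Matrix.mulVec, dotProduct, Fin.sum_univ_two]
  have main : ∀ a b : ℝ, (T * S * T).mulVec ![a, b] = S.mulVec ![a, b] := by
    intro a b
    obtain ⟨u, hu, hu0, hu0'⟩ := hex a b
    have hTu := hT u hu
    have hw := reflect_solution c ω u hsym hu
    have hTw := hT _ hw
    have hderiv : deriv (fun x => u (1 - x)) = fun x => -deriv u (1 - x) :=
      funext fun x => deriv_comp_const_sub u 1 x
    rw [hderiv] at hTw
    simp only [sub_zero, sub_self] at hTw
    -- hTw : ![u 0, -deriv u 0] = T.mulVec ![u 1, -deriv u 1]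
    calc (T * S * T).mulVec ![a, b]
        = T.mulVec (S.mulVec (T.mulVec ![a, b])) := by
          rw [Matrix.mulVec_mulVec, Matrix.mulVec_mulVec]
      _ = T.mulVec (S.mulVec ![u 1, deriv u 1]) := by rw [← hu0, ← hu0', ← hTu]
      _ = T.mulVec ![u 1, -deriv u 1] := by rw [hSvec]
      _ = ![u 0, -deriv u 0] := by rw [← hTw]
      _ = S.mulVec ![a, b] := by rw [hSvec, hu0, hu0']
  have key : T * S * T = S := by
    ext i j
    have := congrFun (main (if j = 0 then 1 else 0) (if j = 1 then 1 else 0)) i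
    fin_cases i <;> fin_cases j <;>
      simpa [Matrix.mulVec, dotProduct, Fin.sum_univ_two] using this
  have hSS : S * S = 1 := by
    rw [hS]
    norm_num [Matrix.mul_fin_two, ← Matrix.one_fin_two]
  have hright : T * (S * T * S) = 1 := by
    calc T * (S * T * S) = (T * S * T) * S := by noncomm_ring
      _ = S * S := by rw [key]
      _ = 1 := hSS
  exact ⟨key, Matrix.isUnit_det_of_right_inverse hright, Matrix.inv_eq_right_inv hright⟩
end

section
/- Let S = !![1, 0; 0, −1]. Let (T_N) be a sequence of 2×2 real matrices with det T_N = 1 for every N. Suppose that for each N there exist a real number λ_N with 0 < |λ_N| < 1 and unit vectors v_N, w_N ∈ ℝ² with T_N.mulVec v_N = λ_N • v_N and T_N.mulVec w_N = (λ_N)⁻¹ • w_N, that λ_N → 0 as N → ∞ (the spectral gap condition), and that there is δ > 0 with |v_N(0)·w_N(1) − v_N(1)·w_N(0)| ≥ δ for all N. If moreover v_N(0)/λ_N → 0 or v_N(1)/λ_N → 0 as N → ∞ (the edge mode condition), then there exists u₀ ∈ ℝ², u₀ ≠ 0, such that T_N.mulVec u₀ → 0 and (S · T_N · S).mulVec u₀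 → 0 as N → ∞. -/
open Filter

lemma S_mulVec' (x : Fin 2 → ℝ) :
    (!![(1:ℝ), 0; 0, -1]).mulVec x = ![x 0, -(x 1)] := by
  ext i
  fin_cases i <;> simp [Matrix.mulVec, dotProduct, Fin.sum_univ_two]

lemma STS_mulVec' (A : Matrix (Fin 2) (Fin 2) ℝ) (x : Fin 2 → ℝ) :
    (!![(1:ℝ),0;0,-1] * A * !![(1:ℝ),0;0,-1]).mulVec x =
    ![(A.mulVec ![x 0, -(x 1)]) 0, -((A.mulVec ![x 0, -(x 1)]) 1)] := by
  rw [← Matrix.mulVec_mulVec, ← Matrix.mulVec_mulVec, S_mulVec', S_mulVec']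

lemma scalar_limit' (a b : ℕ → ℝ) (C : ℝ)
    (hb : ∀ N, |a N| ≤ C * |b N|) (h : Tendsto b atTop (nhds 0)) :
    Tendsto a atTop (nhds 0) := by
  refine squeeze_zero_norm (a := fun N => C * |b N|) hb ?_
  simpa using h.abs.const_mul C

lemma comb_tendsto' (c d : ℕ → ℝ) (v w : ℕ → Fin 2 → ℝ)
    (hv : ∀ N, ‖v N‖ ≤ 1) (hw : ∀ N, ‖w N‖ ≤ 1)
    (hc : Tendsto c atTop (nhds 0)) (hd : Tendsto d atTop (nhds 0)) :
    Tendsto (fun N => c N • v N + d N • w N) atTop (nhds 0) := by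
  refine squeeze_zero_norm (a := fun N => |c N| + |d N|) ?_ ?_
  · intro N
    calc ‖c N • v N + d N • w N‖ ≤ ‖c N • v N‖ + ‖d N • w N‖ := norm_add_le _ _
    _ ≤ |c N| * 1 + |d N| * 1 := by
        rw [norm_smul, norm_smul, Real.norm_eq_abs, Real.norm_eq_abs]
        gcongr
        · exact hv N
        · exact hw N
    _ = |c N| + |d N| := by ring
  · simpa using hc.abs.add hd.abs

lemma unit_norm_le' (x : Fin 2 → ℝ) (h : x 0 ^ 2 + x 1 ^ 2 = 1) : ‖x‖ ≤ 1 := by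
  have h0 : |x 0| ≤ 1 := abs_le.mpr ⟨by nlinarith [sq_nonneg (x 1)], by nlinarith [sq_nonneg (x 1)]⟩
  have h1 : |x 1| ≤ 1 := abs_le.mpr ⟨by nlinarith [sq_nonneg (x 0)], by nlinarith [sq_nonneg (x 0)]⟩
  rw [pi_norm_le_iff_of_nonneg zero_le_one]
  intro i
  fin_cases i
  · simpa using h0
  · simpa using h1

lemma Tlimit' (T : ℕ → Matrix (Fin 2) (Fin 2) ℝ) (lam : ℕ → ℝ)
    (v w : ℕ → Fin 2 → ℝ) (c d : ℕ → ℝ) (u₀ : Fin 2 → ℝ)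
    (hveig : ∀ N, (T N).mulVec (v N) = lam N • v N)
    (hweig : ∀ N, (T N).mulVec (w N) = (lam N)⁻¹ • w N)
    (hvb : ∀ N, ‖v N‖ ≤ 1) (hwb : ∀ N, ‖w N‖ ≤ 1)
    (hdecomp : ∀ N, u₀ = c N • v N + d N • w N)
    (hc : Tendsto (fun N => c N * lam N) atTop (nhds 0))
    (hd : Tendsto (fun N => d N * (lam N)⁻¹) atTop (nhds 0)) :
    Tendsto (fun N => (T N).mulVec u₀) atTop (nhds 0) := by
  have key : ∀ N, (T N).mulVec u₀ =
      (c N * lam N) • v N + (d N * (lam N)⁻¹) • w N := by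
    intro N
    rw [hdecomp N, Matrix.mulVec_add, Matrix.mulVec_smul, Matrix.mulVec_smul,
      hveig N, hweig N, smul_smul, smul_smul]
  simp_rw [key]
  exact comb_tendsto' _ _ _ _ hvb hwb hc hd

/-- The sufficiency direction of Theorem 2.11: the spectral gap condition (I)
together with the edge mode condition (II) imply the existence of a nonzero
localised mode decaying in both directions. Here S = diag(1,−1). -/
theorem edge_mode_existence
    (T : ℕ → Matrix (Fin 2) (Fin 2) ℝ)
    (hdet : ∀ N, (T N).det = 1)
    (lam : ℕ → ℝ) (v w : ℕ → (Fin 2 → ℝ))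
    (hlam : ∀ N, 0 < |lam N| ∧ |lam N| < 1)
    (hvunit : ∀ N, (v N 0) ^ 2 + (v N 1) ^ 2 = 1)
    (hwunit : ∀ N, (w N 0) ^ 2 + (w N 1) ^ 2 = 1)
    (hveig : ∀ N, (T N).mulVec (v N) = lam N • v N)
    (hweig : ∀ N, (T N).mulVec (w N) = (lam N)⁻¹ • w N)
    (hgap : Tendsto lam atTop (nhds 0))
    (δ : ℝ) (hδ : 0 < δ)
    (hindep : ∀ N, δ ≤ |v N 0 * w N 1 - v N 1 * w N 0|)
    (hedge : Tendsto (fun N => v N 0 / lam N) atTop (nhds 0) ∨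
             Tendsto (fun N => v N 1 / lam N) atTop (nhds 0)) :
    ∃ u₀ : Fin 2 → ℝ, u₀ ≠ 0 ∧
      Tendsto (fun N => (T N).mulVec u₀) atTop (nhds 0) ∧
      Tendsto (fun N =>
        ((!![(1 : ℝ), 0; 0, -1] * T N * !![(1 : ℝ), 0; 0, -1]).mulVec u₀))
        atTop (nhds 0) := by
  set D : ℕ → ℝ := fun N => v N 0 * w N 1 - v N 1 * w N 0 with hDdef
  have hDge : ∀ N, δ ≤ |D N| := hindep
  have hDne : ∀ N, D N ≠ 0 := by
    intro N h
    have := hDge N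
    rw [h] at this
    simp at this
    linarith
  have hvb : ∀ N, ‖v N‖ ≤ 1 := fun N => unit_norm_le' _ (hvunit N)
  have hwb : ∀ N, ‖w N‖ ≤ 1 := fun N => unit_norm_le' _ (hwunit N)
  have hvc : ∀ N i, |v N i| ≤ 1 := by
    intro N i
    have := norm_le_pi_norm (v N) i
    simpa using this.trans (hvb N)
  have hwc : ∀ N i, |w N i| ≤ 1 := by
    intro N i
    have := norm_le_pi_norm (w N) i
    simpa using this.trans (hwb N)
  -- bound helper for the slow coefficient
  have hcbound : ∀ (a : ℕ → ℝ), (∀ N, |a N| ≤ 1) →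
      Tendsto (fun N => a N / D N * lam N) atTop (nhds 0) := by
    intro a ha
    apply scalar_limit' _ lam (1/δ) _ hgap
    intro N
    rw [abs_mul, abs_div]
    apply mul_le_mul_of_nonneg_right _ (abs_nonneg _)
    exact div_le_div₀ zero_le_one (ha N) hδ (hDge N)
  -- bound helper for the fast coefficient
  have hdbound : ∀ (a : ℕ → ℝ),
      Tendsto (fun N => a N / lam N) atTop (nhds 0) →
      Tendsto (fun N => a N / D N * (lam N)⁻¹) atTop (nhds 0) := by
    intro a ha
    apply scalar_limit' _ (fun N => a N / lam N) (1/δ) _ ha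
    intro N
    rw [abs_mul, abs_div, abs_inv, abs_div]
    have key : |a N| / |D N| ≤ |a N| / δ :=
      div_le_div₀ (abs_nonneg _) le_rfl hδ (hDge N)
    calc |a N| / |D N| * |lam N|⁻¹ ≤ |a N| / δ * |lam N|⁻¹ :=
          mul_le_mul_of_nonneg_right key (inv_nonneg.mpr (abs_nonneg _))
      _ = 1 / δ * (|a N| / |lam N|) := by
          rw [div_eq_mul_inv, div_eq_mul_inv, div_eq_mul_inv]; ring
  rcases hedge with h0 | h1
  · -- v N 0 / lam N → 0 : take u₀ = ![0, 1]
    have hdecomp : ∀ N, (![0, 1] : Fin 2 → ℝ) =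
        (-(w N 0) / D N) • v N + (v N 0 / D N) • w N := by
      intro N
      have hD := hDne N
      ext i
      fin_cases i <;>
      · simp only [Pi.add_apply, Pi.smul_apply, smul_eq_mul, Fin.zero_eta, Fin.mk_one,
          Matrix.cons_val_zero, Matrix.cons_val_one, Matrix.head_cons]
        field_simp
        try simp only [hDdef]
        ring
    have hf : Tendsto (fun N => (T N).mulVec ![0, 1]) atTop (nhds 0) := by
      apply Tlimit' T lam v w (fun N => -(w N 0) / D N) (fun N => v N 0 / D N)
        _ hveig hweig hvb hwb hdecomp
      · apply hcbound
        intro N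
        rw [abs_neg]
        exact hwc N 0
      · exact hdbound _ h0
    have hf0 : Tendsto (fun N => (T N).mulVec ![0, 1] 0) atTop (nhds 0) := by
      simpa using tendsto_pi_nhds.mp hf 0
    have hf1 : Tendsto (fun N => (T N).mulVec ![0, 1] 1) atTop (nhds 0) := by
      simpa using tendsto_pi_nhds.mp hf 1
    refine ⟨![0, 1], ?_, hf, ?_⟩
    · intro h
      have := congrFun h 1
      norm_num at this
    · have hS : ∀ N, (!![(1 : ℝ), 0; 0, -1] * T N * !![(1 : ℝ), 0; 0, -1]).mulVec ![0, 1] =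
          ![-(((T N).mulVec ![0, 1]) 0), ((T N).mulVec ![0, 1]) 1] := by
        intro N
        rw [STS_mulVec']
        have e2 : (![(![(0:ℝ), 1]) 0, -((![(0:ℝ), 1]) 1)] : Fin 2 → ℝ) = -![0, 1] := by
          ext i; fin_cases i <;> norm_num
        rw [e2, Matrix.mulVec_neg]
        ext i; fin_cases i <;> simp
      simp_rw [hS]
      rw [tendsto_pi_nhds]
      intro i
      fin_cases i
      · simpa using hf0.neg
      · simpa using hf1
  · -- v N 1 / lam N → 0 : take u₀ = ![1, 0]
    have hdecomp : ∀ N, (![1, 0] : Fin 2 → ℝ) =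
        (w N 1 / D N) • v N + (-(v N 1) / D N) • w N := by
      intro N
      have hD := hDne N
      ext i
      fin_cases i <;>
      · simp only [Pi.add_apply, Pi.smul_apply, smul_eq_mul, Fin.zero_eta, Fin.mk_one,
          Matrix.cons_val_zero, Matrix.cons_val_one, Matrix.head_cons]
        field_simp
        try simp only [hDdef]
        ring
    have hf : Tendsto (fun N => (T N).mulVec ![1, 0]) atTop (nhds 0) := by
      apply Tlimit' T lam v w (fun N => w N 1 / D N) (fun N => -(v N 1) / D N)
        _ hveig hweig hvb hwb hdecomp
      · exact hcbound _ (fun N => hwc N 1)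
      · apply hdbound
        simp_rw [neg_div]
        simpa using h1.neg
    have hf0 : Tendsto (fun N => (T N).mulVec ![1, 0] 0) atTop (nhds 0) := by
      simpa using tendsto_pi_nhds.mp hf 0
    have hf1 : Tendsto (fun N => (T N).mulVec ![1, 0] 1) atTop (nhds 0) := by
      simpa using tendsto_pi_nhds.mp hf 1
    refine ⟨![1, 0], ?_, hf, ?_⟩
    · intro h
      have := congrFun h 0
      norm_num at this
    · have hS : ∀ N, (!![(1 : ℝ), 0; 0, -1] * T N * !![(1 : ℝ), 0; 0, -1]).mulVec ![1, 0] =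
          ![(((T N).mulVec ![1, 0]) 0), -(((T N).mulVec ![1, 0]) 1)] := by
        intro N
        rw [STS_mulVec']
        have e2 : (![(![(1:ℝ), 0]) 0, -((![(1:ℝ), 0]) 1)] : Fin 2 → ℝ) = ![1, 0] := by
          ext i; fin_cases i <;> norm_num
        rw [e2]
      simp_rw [hS]
      rw [tendsto_pi_nhds]
      intro i
      fin_cases i
      · simpa using hf0
      · simpa using hf1.neg
end

section
/- Let S = !![1, 0; 0, −1]. Let (T_N) be a sequence of 2×2 real matrices with det T_N = 1 for every N. Suppose that for each N there exist a real number λ_N with 0 < |λ_N| < 1 and unit vectors v_N, w_N ∈ ℝ² with T_N.mulVec v_N = λ_N • v_N and T_N.mulVec w_N = (λ_N)⁻¹ • w_N, that λ_N → 0 as N → ∞ (the spectral gap condition), and that there is δ > 0 with |v_N(0)·w_N(1) − v_N(1)·w_N(0)| ≥ δ for all N. If there exists u₀ ∈ ℝ², u₀ ≠ 0, such that T_N.mulVec u₀ → 0 and (S · T_N · S).mulVec u₀ → 0 as N → ∞, then v_N(0)/λ_N → 0 or v_N(1)/λ_N → 0 as N → ∞ (the edge mode condition). -/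
open Filter

/-- det(v, T·u) = λ⁻¹ det(v, u) when T·v = λ·v and det T = 1 (multiplied form). -/
lemma cross_id (T : Matrix (Fin 2) (Fin 2) ℝ) (hd : T.det = 1) (lam : ℝ) (v u : Fin 2 → ℝ)
    (hv : T.mulVec v = lam • v) :
    lam * (v 0 * (T.mulVec u 1) - v 1 * (T.mulVec u 0)) = v 0 * u 1 - v 1 * u 0 := by
  have h0 := congrFun hv 0
  have h1 := congrFun hv 1
  simp [Matrix.mulVec, dotProduct, Fin.sum_univ_two, Matrix.det_fin_two] at h0 h1 hd ⊢
  linear_combination (-(T 1 0 * u 0 + T 1 1 * u 1)) * h0 + (T 0 0 * u 0 + T 0 1 * u 1) * h1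
    + (v 0 * u 1 - v 1 * u 0) * hd

/-- The analogous identity for the reflected matrix S·T·S with S = diag(1,−1). -/
lemma cross_id' (T : Matrix (Fin 2) (Fin 2) ℝ) (hd : T.det = 1) (lam : ℝ) (v u : Fin 2 → ℝ)
    (hv : T.mulVec v = lam • v) :
    lam * (v 0 * ((!![(1:ℝ),0;0,-1] * T * !![(1:ℝ),0;0,-1]).mulVec u 1)
         + v 1 * ((!![(1:ℝ),0;0,-1] * T * !![(1:ℝ),0;0,-1]).mulVec u 0))
      = v 0 * u 1 + v 1 * u 0 := by
  have h0 := congrFun hv 0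
  have h1 := congrFun hv 1
  simp [Matrix.mulVec, Matrix.vecMul, dotProduct, Matrix.mul_apply, Fin.sum_univ_two,
    Matrix.det_fin_two] at h0 h1 hd ⊢
  linear_combination (-(-(T 1 0 * u 0) + T 1 1 * u 1)) * h0 + (-(T 0 0 * u 0 - T 0 1 * u 1)) * h1
    + (v 0 * u 1 + v 1 * u 0) * hd

/-- The necessity direction of Theorem 2.11: under the spectral gap condition (I),
the existence of a nonzero mode decaying in both directions forces the edge mode
condition (II). Here S = diag(1,−1). -/
theorem edge_mode_necessity
    (T : ℕ → Matrix (Fin 2) (Fin 2) ℝ)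
    (hdet : ∀ N, (T N).det = 1)
    (lam : ℕ → ℝ) (v w : ℕ → (Fin 2 → ℝ))
    (hlam : ∀ N, 0 < |lam N| ∧ |lam N| < 1)
    (hvunit : ∀ N, (v N 0) ^ 2 + (v N 1) ^ 2 = 1)
    (hwunit : ∀ N, (w N 0) ^ 2 + (w N 1) ^ 2 = 1)
    (hveig : ∀ N, (T N).mulVec (v N) = lam N • v N)
    (hweig : ∀ N, (T N).mulVec (w N) = (lam N)⁻¹ • w N)
    (hgap : Tendsto lam atTop (nhds 0))
    (δ : ℝ) (hδ : 0 < δ)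
    (hindep : ∀ N, δ ≤ |v N 0 * w N 1 - v N 1 * w N 0|)
    (u₀ : Fin 2 → ℝ) (hu₀ : u₀ ≠ 0)
    (hdecay : Tendsto (fun N => (T N).mulVec u₀) atTop (nhds 0))
    (hdecay' : Tendsto (fun N =>
        ((!![(1 : ℝ), 0; 0, -1] * T N * !![(1 : ℝ), 0; 0, -1]).mulVec u₀))
        atTop (nhds 0)) :
    Tendsto (fun N => v N 0 / lam N) atTop (nhds 0) ∨
      Tendsto (fun N => v N 1 / lam N) atTop (nhds 0) := by
  classical
  have hlamne : ∀ N, lam N ≠ 0 := by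
    intro N h
    have := (hlam N).1
    simp [h] at this
  have hvb : ∀ N i, |v N i| ≤ 1 := by
    intro N i
    have h := hvunit N
    have h2 : (v N i) ^ 2 ≤ 1 := by
      fin_cases i
      · show (v N 0) ^ 2 ≤ 1; nlinarith [sq_nonneg (v N 1)]
      · show (v N 1) ^ 2 ≤ 1; nlinarith [sq_nonneg (v N 0)]
    nlinarith [sq_abs (v N i), abs_nonneg (v N i)]
  -- componentwise convergence
  have hc : ∀ i, Tendsto (fun N => (T N).mulVec u₀ i) atTop (nhds 0) := by
    intro i
    have h := hdecay
    rw [tendsto_pi_nhds] at h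
    simpa using h i
  have hc' : ∀ i, Tendsto
      (fun N => (!![(1:ℝ),0;0,-1] * T N * !![(1:ℝ),0;0,-1]).mulVec u₀ i) atTop (nhds 0) := by
    intro i
    have h := hdecay'
    rw [tendsto_pi_nhds] at h
    simpa using h i
  have habs : ∀ (a b c d : ℝ), |a| ≤ 1 → |b| ≤ 1 → |a * c + b * d| ≤ |c| + |d| := by
    intro a b c d ha hb
    calc |a * c + b * d| ≤ |a * c| + |b * d| := abs_add_le _ _
      _ ≤ |c| + |d| := by
        rw [abs_mul, abs_mul]
        gcongr <;> [exact mul_le_of_le_one_left (abs_nonneg _) ha;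
          exact mul_le_of_le_one_left (abs_nonneg _) hb]
  have hFto : Tendsto
      (fun N => v N 0 * ((T N).mulVec u₀ 1) - v N 1 * ((T N).mulVec u₀ 0))
      atTop (nhds 0) := by
    refine squeeze_zero_norm (a := fun N => |(T N).mulVec u₀ 1| + |(T N).mulVec u₀ 0|) ?_ ?_
    · intro N
      have := habs (v N 0) (-(v N 1)) ((T N).mulVec u₀ 1) ((T N).mulVec u₀ 0)
        (hvb N 0) (by simpa using hvb N 1)
      simpa [sub_eq_add_neg, neg_mul, Real.norm_eq_abs] using this
    · simpa using ((hc 1).abs.add ((hc 0).abs))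
  have hGto : Tendsto
      (fun N => v N 0 * ((!![(1:ℝ),0;0,-1] * T N * !![(1:ℝ),0;0,-1]).mulVec u₀ 1)
        + v N 1 * ((!![(1:ℝ),0;0,-1] * T N * !![(1:ℝ),0;0,-1]).mulVec u₀ 0))
      atTop (nhds 0) := by
    refine squeeze_zero_norm
      (a := fun N => |(!![(1:ℝ),0;0,-1] * T N * !![(1:ℝ),0;0,-1]).mulVec u₀ 1|
        + |(!![(1:ℝ),0;0,-1] * T N * !![(1:ℝ),0;0,-1]).mulVec u₀ 0|) ?_ ?_
    · intro N
      have := habs (v N 0) (v N 1)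
        ((!![(1:ℝ),0;0,-1] * T N * !![(1:ℝ),0;0,-1]).mulVec u₀ 1)
        ((!![(1:ℝ),0;0,-1] * T N * !![(1:ℝ),0;0,-1]).mulVec u₀ 0)
        (hvb N 0) (hvb N 1)
      simpa [Real.norm_eq_abs] using this
    · simpa using ((hc' 1).abs.add ((hc' 0).abs))
  have hF : ∀ N, lam N * (v N 0 * ((T N).mulVec u₀ 1) - v N 1 * ((T N).mulVec u₀ 0))
      = v N 0 * u₀ 1 - v N 1 * u₀ 0 := fun N =>
    cross_id (T N) (hdet N) (lam N) (v N) u₀ (hveig N)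
  have hG : ∀ N, lam N * (v N 0 * ((!![(1:ℝ),0;0,-1] * T N * !![(1:ℝ),0;0,-1]).mulVec u₀ 1)
        + v N 1 * ((!![(1:ℝ),0;0,-1] * T N * !![(1:ℝ),0;0,-1]).mulVec u₀ 0))
      = v N 0 * u₀ 1 + v N 1 * u₀ 0 := fun N =>
    cross_id' (T N) (hdet N) (lam N) (v N) u₀ (hveig N)
  by_cases h1 : u₀ 1 = 0
  · -- then u₀ 0 ≠ 0, and v N 1 / lam N = (F N - G N) / (-2 * u₀ 0) → 0
    have h0 : u₀ 0 ≠ 0 := by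
      intro h0
      apply hu₀
      funext i
      fin_cases i <;> simp [h0, h1]
    right
    have hne : (-2 : ℝ) * u₀ 0 ≠ 0 := by simpa using h0
    have heq : (fun N => v N 1 / lam N)
        = fun N => ((v N 0 * ((T N).mulVec u₀ 1) - v N 1 * ((T N).mulVec u₀ 0))
            - (v N 0 * ((!![(1:ℝ),0;0,-1] * T N * !![(1:ℝ),0;0,-1]).mulVec u₀ 1)
              + v N 1 * ((!![(1:ℝ),0;0,-1] * T N * !![(1:ℝ),0;0,-1]).mulVec u₀ 0)))
            / (-2 * u₀ 0) := by
      funext N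
      rw [div_eq_div_iff (hlamne N) hne]
      linear_combination -(hF N) + hG N
    rw [heq]
    simpa using (hFto.sub hGto).div_const (-2 * u₀ 0)
  · left
    have hne : (2 : ℝ) * u₀ 1 ≠ 0 := by simpa using h1
    have heq : (fun N => v N 0 / lam N)
        = fun N => ((v N 0 * ((T N).mulVec u₀ 1) - v N 1 * ((T N).mulVec u₀ 0))
            + (v N 0 * ((!![(1:ℝ),0;0,-1] * T N * !![(1:ℝ),0;0,-1]).mulVec u₀ 1)
              + v N 1 * ((!![(1:ℝ),0;0,-1] * T N * !![(1:ℝ),0;0,-1]).mulVec u₀ 0)))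
            / (2 * u₀ 1) := by
      funext N
      rw [div_eq_div_iff (hlamne N) hne]
      linear_combination -(hF N) - hG N
    rw [heq]
    simpa using (hFto.add hGto).div_const (2 * u₀ 1)
end

section
/- Let T_A and T_B be 2×2 real matrices with det T_A = 1 and det T_B = 1. Define the Fibonacci transfer-matrix sequence by T 1 = T_A, T 2 = T_B · T_A, and T (N+1) = T (N−1) · T N for N ≥ 2, and set x N = trace (T N). Then x (N+1) = x N · x (N−1) − x (N−2) for all N ≥ 3. -/
/-- Key 2×2 identity: if `det Q = 1` then `tr (Q(PQ)) = tr Q · tr (PQ) − tr P`. -/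
lemma trace_aux (P Q : Matrix (Fin 2) (Fin 2) ℝ) (h : Q.det = 1) :
    (Q * (P * Q)).trace = Q.trace * (P * Q).trace - P.trace := by
  simp only [Matrix.trace_fin_two, Matrix.mul_apply, Matrix.det_fin_two,
    Fin.sum_univ_two] at *
  linear_combination (-(P 0 0) - P 1 1) * h

/-- Lemma 3.1 (Kohmoto's recursion relation): the traces of the Fibonacci
products of SL(2,ℝ) transfer matrices satisfy
x_{N+1} = x_N · x_{N−1} − x_{N−2}. -/
theorem kohmoto_trace_recursion
    (TA TB : Matrix (Fin 2) (Fin 2) ℝ)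
    (hA : TA.det = 1) (hB : TB.det = 1)
    (T : ℕ → Matrix (Fin 2) (Fin 2) ℝ)
    (hT1 : T 1 = TA) (hT2 : T 2 = TB * TA)
    (hrec : ∀ N ≥ 2, T (N + 1) = T (N - 1) * T N) :
    ∀ N ≥ 3, (T (N + 1)).trace = (T N).trace * (T (N - 1)).trace - (T (N - 2)).trace := by
  have hdet : ∀ N, 1 ≤ N → (T N).det = 1 := by
    intro N hN
    induction N using Nat.strong_induction_on with
    | _ N ih =>
      match N, hN with
      | 1, _ => simp [hT1, hA]
      | 2, _ => simp [hT2, Matrix.det_mul, hA, hB]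
      | (n+3), _ =>
        have h1 : T (n + 3) = T (n + 1) * T (n + 2) := by
          have := hrec (n + 2) (by omega)
          simpa using this
        rw [h1, Matrix.det_mul, ih (n+1) (by omega) (by omega),
          ih (n+2) (by omega) (by omega), one_mul]
  intro N hN
  obtain ⟨n, rfl⟩ : ∃ n, N = n + 3 := ⟨N - 3, by omega⟩
  have h1 : T (n + 4) = T (n + 2) * T (n + 3) := by
    have := hrec (n + 3) (by omega); simpa using this
  have h2 : T (n + 3) = T (n + 1) * T (n + 2) := by
    have := hrec (n + 2) (by omega); simpa using this
  have hQ : (T (n + 2)).det = 1 := hdet _ (by omega)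
  have key := trace_aux (T (n + 1)) (T (n + 2)) hQ
  show (T (n + 4)).trace = (T (n+3)).trace * (T (n + 2)).trace - (T (n + 1)).trace
  rw [h1, h2]
  linear_combination key
end

section
/- Define T_A(ω) = !![cos ω, sin ω/ω; −ω·sin ω, cos ω] and T_B(ω,r) = !![cos(rω), sin(rω)/(rω); −rω·sin(rω), cos(rω)], and set T 1 = T_A(ω), T 2 = T_B(ω,r)·T_A(ω), T 3 = T 1 · T 2, with x N = trace(T N). For any n, m ∈ ℕ, with ω = (2n+1)·π/2 and r = (2m+1)/(2n+1), one has x 1 = 0, x 3 = 0, and |x 2| = r + 1/r. -/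
/-- The transfer matrix of the homogeneous unit-length material A
(equation (3.2) of the paper). -/
noncomputable def fibTA (ω : ℝ) : Matrix (Fin 2) (Fin 2) ℝ :=
  !![Real.cos ω, Real.sin ω / ω; -ω * Real.sin ω, Real.cos ω]

/-- The transfer matrix of the homogeneous unit-length material B
(equation (3.2) of the paper). -/
noncomputable def fibTB (ω r : ℝ) : Matrix (Fin 2) (Fin 2) ℝ :=
  !![Real.cos (r * ω), Real.sin (r * ω) / (r * ω);
     -(r * ω) * Real.sin (r * ω), Real.cos (r * ω)]

lemma fib_aux_eq (k : ℕ) : ((2 * k + 1 : ℝ)) * Real.pi / 2 = k * Real.pi + Real.pi / 2 := by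
  ring

lemma fib_cos_odd (k : ℕ) : Real.cos ((2 * k + 1 : ℝ) * Real.pi / 2) = 0 := by
  rw [fib_aux_eq, Real.cos_add, Real.cos_pi_div_two, Real.sin_pi_div_two,
    Real.sin_nat_mul_pi]
  ring

lemma fib_sin_odd (k : ℕ) : Real.sin ((2 * k + 1 : ℝ) * Real.pi / 2) = (-1) ^ k := by
  rw [fib_aux_eq, Real.sin_add, Real.cos_pi_div_two, Real.sin_pi_div_two,
    Real.sin_nat_mul_pi]
  have : Real.cos (k * Real.pi) = (-1) ^ k := by
    simpa using Real.cos_nat_mul_pi_sub 0 k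
  rw [this]; ring

/-- The explicit parameter choice used in the proof of Lemma 3.2: with
ω = (2n+1)π/2 and r = (2m+1)/(2n+1), the first three Fibonacci traces satisfy
x₁ = 0, x₃ = 0 and |x₂| = r + 1/r. -/
theorem fibonacci_initial_traces (n m : ℕ) :
    let ω : ℝ := (2 * n + 1) * Real.pi / 2
    let r : ℝ := (2 * m + 1) / (2 * n + 1)
    let T1 := fibTA ω
    let T2 := fibTB ω r * fibTA ω
    let T3 := T1 * T2
    T1.trace = 0 ∧ T3.trace = 0 ∧ |T2.trace| = r + 1 / r := by
  intro ω r T1 T2 T3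
  have hπ : Real.pi ≠ 0 := Real.pi_ne_zero
  have hn : (2 * (n : ℝ) + 1) ≠ 0 := by positivity
  have hm : (2 * (m : ℝ) + 1) ≠ 0 := by positivity
  have hω : ω ≠ 0 := by
    show (2 * (n : ℝ) + 1) * Real.pi / 2 ≠ 0
    positivity
  have hr : r > 0 := by
    show (2 * (m : ℝ) + 1) / (2 * (n : ℝ) + 1) > 0
    positivity
  have hrω : r * ω = (2 * m + 1 : ℝ) * Real.pi / 2 := by
    show ((2 * m + 1 : ℝ) / (2 * n + 1)) * ((2 * (n : ℝ) + 1) * Real.pi / 2) = _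
    field_simp
  have hcos : Real.cos ω = 0 := fib_cos_odd n
  have hsin : Real.sin ω = (-1) ^ n := fib_sin_odd n
  have hcos' : Real.cos (r * ω) = 0 := by rw [hrω]; exact fib_cos_odd m
  have hsin' : Real.sin (r * ω) = (-1) ^ m := by rw [hrω]; exact fib_sin_odd m
  have hT2 : T2.trace = -((-1)^n * (-1)^m) * (1 / r + r) := by
    show (fibTB ω r * fibTA ω).trace = _
    simp only [fibTA, fibTB, hcos, hsin, hcos', hsin', Matrix.mul_fin_two,
      Matrix.trace_fin_two_of]
    have hrne : r ≠ 0 := ne_of_gt hr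
    field_simp
    ring
  refine ⟨?_, ?_, ?_⟩
  · show (fibTA ω).trace = 0
    simp [fibTA, hcos, Matrix.trace_fin_two_of]
  · show (fibTA ω * (fibTB ω r * fibTA ω)).trace = 0
    simp only [fibTA, fibTB, hcos, hsin, hcos', hsin', Matrix.mul_fin_two,
      Matrix.trace_fin_two_of]
    field_simp
    ring
  · rw [hT2, abs_mul]
    have h1 : |(-((-1:ℝ)^n * (-1)^m))| = 1 := by
      rw [abs_neg, abs_mul, abs_pow, abs_pow, abs_neg, abs_one, one_pow, one_pow, mul_one]
    rw [h1, one_mul, abs_of_pos (by positivity)]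
    ring
end

section
/- Define T_A(ω) = !![cos ω, sin ω/ω; −ω·sin ω, cos ω] and T_B(ω,r) = !![cos(rω), sin(rω)/(rω); −rω·sin(rω), cos(rω)], define the Fibonacci transfer-matrix sequence T 1 = T_A(ω), T 2 = T_B(ω,r)·T_A(ω), T (N+1) = T (N−1) · T N for N ≥ 2, and set x N = trace(T N). Then for every K > 0 there exist ω > 0 and r > 0 such that the sequence (x N) is bounded (there is C with |x N| ≤ C for all N ≥ 1) and sup over N of |x N| exceeds K (there exists N with |x N| > K). -/
/-- Lemma 3.2 (arbitrarily large bounded trace sequences): for every K > 0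
there are parameters ω, r > 0 for which the Fibonacci sequence of transfer
matrix traces is bounded yet takes a value of magnitude exceeding K. -/
theorem arbitrarily_large_bounded_traces :
    ∀ K > (0 : ℝ), ∃ ω r : ℝ, 0 < ω ∧ 0 < r ∧
      ∀ T : ℕ → Matrix (Fin 2) (Fin 2) ℝ,
        T 1 = fibTA ω → T 2 = fibTB ω r * fibTA ω →
        (∀ N ≥ 2, T (N + 1) = T (N - 1) * T N) →
        (∃ C : ℝ, ∀ N ≥ 1, |(T N).trace| ≤ C) ∧
          (∃ N ≥ 1, K < |(T N).trace|) := by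
  intro K hK
  have hπ := Real.pi_pos
  set n : ℕ := ⌈K⌉₊ with hn
  set r : ℝ := 4 * (n : ℝ) + 1 with hrdef
  have hr : 0 < r := by positivity
  have hr0 : r ≠ 0 := ne_of_gt hr
  have hπ0 : Real.pi ≠ 0 := ne_of_gt hπ
  have hKr : K < r := by
    have h1 : K ≤ (n : ℝ) := Nat.le_ceil K
    have h2 : (0:ℝ) ≤ (n : ℝ) := Nat.cast_nonneg n
    rw [hrdef]; linarith
  refine ⟨Real.pi / 2, r, by positivity, hr, ?_⟩
  intro T h1 h2 hrec
  set p : ℝ := Real.pi / 2 with hp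
  have hp0 : p ≠ 0 := by positivity
  -- trig values
  have hcos : Real.cos p = 0 := Real.cos_pi_div_two
  have hsin : Real.sin p = 1 := Real.sin_pi_div_two
  have hrw : r * p = p + (n : ℝ) * (2 * Real.pi) := by rw [hrdef, hp]; ring
  have hcos2 : Real.cos (r * p) = 0 := by
    rw [hrw]
    rw [show ((n : ℝ) * (2 * Real.pi)) = (n : ℝ) * (2 * Real.pi) from rfl]
    rw [Real.cos_add_nat_mul_two_pi, hcos]
  have hsin2 : Real.sin (r * p) = 1 := by
    rw [hrw, Real.sin_add_nat_mul_two_pi, hsin]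
  -- explicit matrices
  have hTA : fibTA p = !![0, 1/p; -p, 0] := by
    unfold fibTA
    rw [hcos, hsin]
    norm_num
  have hTB : fibTB p r = !![0, 1/(r*p); -(r*p), 0] := by
    unfold fibTB
    rw [hcos2, hsin2]
    norm_num
  have hT1 : T 1 = !![0, 1/p; -p, 0] := by rw [h1, hTA]
  have hT2 : T 2 = !![-(1/r), 0; 0, -r] := by
    rw [h2, hTA, hTB, Matrix.mul_fin_two]
    ext i j <;> fin_cases i <;> fin_cases j <;> simp <;> field_simp
  have hT3 : T 3 = !![0, -(r/p); p/r, 0] := by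
    have := hrec 2 (by norm_num)
    norm_num at this
    rw [this, hT1, hT2, Matrix.mul_fin_two]
    ext i j <;> fin_cases i <;> fin_cases j <;> simp <;> field_simp <;> ring
  have hT4 : T 4 = !![0, 1/p; -p, 0] := by
    have := hrec 3 (by norm_num)
    norm_num at this
    rw [this, hT2, hT3, Matrix.mul_fin_two]
    ext i j <;> fin_cases i <;> fin_cases j <;> simp <;> field_simp <;> ring
  have hT5 : T 5 = !![r, 0; 0, 1/r] := by
    have := hrec 4 (by norm_num)
    norm_num at this
    rw [this, hT3, hT4, Matrix.mul_fin_two]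
    ext i j <;> fin_cases i <;> fin_cases j <;> simp <;> field_simp <;> ring
  have hT6 : T 6 = !![0, 1/(p*r); -(p*r), 0] := by
    have := hrec 5 (by norm_num)
    norm_num at this
    rw [this, hT4, hT5, Matrix.mul_fin_two]
    ext i j <;> fin_cases i <;> fin_cases j <;> simp <;> field_simp <;> ring
  have hT7 : T 7 = T 1 := by
    have := hrec 6 (by norm_num)
    norm_num at this
    rw [this, hT5, hT6, hT1, Matrix.mul_fin_two]
    ext i j <;> fin_cases i <;> fin_cases j <;> simp <;> field_simp <;> ring
  have hT8 : T 8 = T 2 := by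
    have := hrec 7 (by norm_num)
    norm_num at this
    rw [this, hT6, hT7, hT1, hT2, Matrix.mul_fin_two]
    ext i j <;> fin_cases i <;> fin_cases j <;> simp <;> field_simp <;> ring
  -- periodicity
  have hper : ∀ N, 1 ≤ N → T (N + 6) = T N := by
    intro N
    induction N using Nat.strong_induction_on with
    | _ N ih =>
      intro hN
      match N, hN with
      | 1, _ => simpa using hT7
      | 2, _ => exact hT8
      | (m+3), _ =>
        have e1 : T (m + 3 + 6) = T (m + 1 + 6) * T (m + 2 + 6) := by
          have := hrec (m + 8) (by omega)
          simpa [show m + 8 + 1 = m + 3 + 6 from by omega,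
                 show m + 8 - 1 = m + 1 + 6 from by omega,
                 show m + 8 = m + 2 + 6 from by omega] using this
        have e2 : T (m + 3) = T (m + 1) * T (m + 2) := by
          have := hrec (m + 2) (by omega)
          simpa using this
        rw [e1, ih (m+1) (by omega) (by omega), ih (m+2) (by omega) (by omega), ← e2]
  -- traces of one period
  have htr1 : (T 1).trace = 0 := by rw [hT1, Matrix.trace_fin_two_of]; ring
  have htr2 : (T 2).trace = -(1/r) + -r := by rw [hT2, Matrix.trace_fin_two_of]
  have htr3 : (T 3).trace = 0 := by rw [hT3, Matrix.trace_fin_two_of]; ring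
  have htr4 : (T 4).trace = 0 := by rw [hT4, Matrix.trace_fin_two_of]; ring
  have htr5 : (T 5).trace = r + 1/r := by rw [hT5, Matrix.trace_fin_two_of]
  have htr6 : (T 6).trace = 0 := by rw [hT6, Matrix.trace_fin_two_of]; ring
  have hrinv : 0 < 1/r := by positivity
  constructor
  · refine ⟨r + 1/r, ?_⟩
    intro N
    induction N using Nat.strong_induction_on with
    | _ N ih =>
      intro hN
      match N, hN with
      | 1, _ => rw [htr1]; simp; positivity
      | 2, _ => rw [htr2]; rw [abs_of_nonpos (by linarith)]; ring_nf; linarith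
      | 3, _ => rw [htr3]; simp; positivity
      | 4, _ => rw [htr4]; simp; positivity
      | 5, _ => rw [htr5]; rw [abs_of_nonneg (by linarith)]
      | 6, _ => rw [htr6]; simp; positivity
      | (m+7), _ =>
        have h : T (m + 7) = T (m + 1) := by
          have := hper (m + 1) (by omega)
          simpa [show m + 1 + 6 = m + 7 from by omega] using this
        rw [h]
        exact ih (m+1) (by omega) (by omega)
  · refine ⟨2, by norm_num, ?_⟩
    rw [htr2, abs_of_nonpos (by linarith)]
    have : r + 1/r > K := by linarith
    linarith [this]
end

section
/- Let x : ℕ → ℝ satisfy the Kohmoto trace recursion x (N+1) = x N · x (N−1) − x (N−2) for all N ≥ 3. Suppose there exists n ≥ 3 such that 2 < |x (n−2)|, 2·|x (n−2)| < |x (n−1)|, and 2·|x (n−1)| < |x n|. Then 2·|x N| < |x (N+1)| for all N ≥ n. -/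
/-- Lemma 3.3 (doubling condition): if three successive terms of the Kohmoto
trace recursion each more than double the previous one, starting from a value
of magnitude greater than 2, then the doubling continues indefinitely. -/
theorem kohmoto_doubling
    (x : ℕ → ℝ)
    (hrec : ∀ N ≥ 3, x (N + 1) = x N * x (N - 1) - x (N - 2))
    (n : ℕ) (hn : 3 ≤ n)
    (h1 : 2 < |x (n - 2)|)
    (h2 : 2 * |x (n - 2)| < |x (n - 1)|)
    (h3 : 2 * |x (n - 1)| < |x n|) :
    ∀ N ≥ n, 2 * |x N| < |x (N + 1)| := by
  have key : ∀ N, n ≤ N →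
      2 < |x (N - 2)| ∧ 2 * |x (N - 2)| < |x (N - 1)| ∧ 2 * |x (N - 1)| < |x N| := by
    intro N hN
    induction N, hN using Nat.le_induction with
    | base => exact ⟨h1, h2, h3⟩
    | succ N hN ih =>
      obtain ⟨a, b, c⟩ := ih
      have h3N : 3 ≤ N := le_trans hn hN
      have e1 : N + 1 - 2 = N - 1 := by omega
      have e2 : N + 1 - 1 = N := by omega
      rw [e1, e2]
      have hb2 : (2:ℝ) < |x (N - 1)| := by linarith
      refine ⟨hb2, by linarith, ?_⟩
      have habs : |x N| * |x (N - 1)| - |x (N - 2)| ≤ |x (N + 1)| := by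
        rw [hrec N h3N, ← abs_mul]
        exact abs_sub_abs_le_abs_sub _ _
      nlinarith [abs_nonneg (x (N - 2)), abs_nonneg (x N),
        mul_lt_mul_of_pos_left hb2 (show (0:ℝ) < |x N| by linarith)]
  intro N hN
  exact (key (N + 1) (by omega)).2.2.trans_eq' (by rw [show N + 1 - 1 = N by omega])
end

section
/- Let x : ℕ → ℝ satisfy the Kohmoto trace recursion x (N+1) = x N · x (N−1) − x (N−2) for all N ≥ 3, and suppose there exists n ≥ 3 such that 2 < |x (n−2)|, 2·|x (n−2)| < |x (n−1)|, and 2·|x (n−1)| < |x n|. Then |x N| → ∞ as N → ∞; in particular, for all N ≥ n, |x N| ≥ 2^(N−n)·|x n|. -/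
open Filter

/-- The consequence of Lemma 3.3: once the doubling condition is attained, the
Kohmoto trace sequence diverges, with |x N| ≥ 2^(N−n)·|x n| for N ≥ n. -/
theorem kohmoto_doubling_divergence
    (x : ℕ → ℝ)
    (hrec : ∀ N ≥ 3, x (N + 1) = x N * x (N - 1) - x (N - 2))
    (n : ℕ) (hn : 3 ≤ n)
    (h1 : 2 < |x (n - 2)|)
    (h2 : 2 * |x (n - 2)| < |x (n - 1)|)
    (h3 : 2 * |x (n - 1)| < |x n|) :
    Tendsto (fun N => |x N|) atTop atTop ∧
      ∀ N ≥ n, 2 ^ (N - n) * |x n| ≤ |x N| := by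
  have key : ∀ k, 2 < |x (n + k - 2)| ∧ 2 * |x (n + k - 2)| < |x (n + k - 1)|
      ∧ 2 * |x (n + k - 1)| < |x (n + k)| := by
    intro k
    induction k with
    | zero => simpa using ⟨h1, h2, h3⟩
    | succ k ih =>
      obtain ⟨ha, hb, hc⟩ := ih
      have hR := hrec (n + k) (by omega)
      have e1 : n + (k + 1) - 2 = n + k - 1 := by omega
      have e2 : n + (k + 1) - 1 = n + k := by omega
      have e3 : n + (k + 1) = n + k + 1 := by omega
      rw [e1, e2, e3]
      have habs : |x (n + k)| * |x (n + k - 1)| - |x (n + k - 2)| ≤ |x (n + k + 1)| := by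
        rw [hR, ← abs_mul]
        exact abs_sub_abs_le_abs_sub _ _
      refine ⟨by linarith, hc, ?_⟩
      nlinarith [abs_nonneg (x (n + k)), abs_nonneg (x (n + k - 1))]
  have key2 : ∀ k, 2 ^ k * |x n| ≤ |x (n + k)| := by
    intro k
    induction k with
    | zero => simp
    | succ k ih =>
      have h := (key (k + 1)).2.2
      have e2 : n + (k + 1) - 1 = n + k := by omega
      rw [e2] at h
      have : (2 : ℝ) ^ (k + 1) * |x n| = 2 * (2 ^ k * |x n|) := by ring
      rw [this]
      have hxn : (0 : ℝ) ≤ |x n| := abs_nonneg _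
      nlinarith [pow_nonneg (by norm_num : (0:ℝ) ≤ 2) k]
  have hbound : ∀ N ≥ n, 2 ^ (N - n) * |x n| ≤ |x N| := by
    intro N hN
    have := key2 (N - n)
    rwa [Nat.add_sub_cancel' hN] at this
  refine ⟨?_, hbound⟩
  have hxn : (0 : ℝ) < |x n| := by
    have := abs_nonneg (x (n - 1))
    linarith
  have htend : Tendsto (fun N => (2 : ℝ) ^ (N - n) * |x n|) atTop atTop := by
    apply Tendsto.atTop_mul_const hxn
    exact (tendsto_pow_atTop_atTop_of_one_lt (by norm_num : (1:ℝ) < 2)).comp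
      (tendsto_sub_atTop_nat n)
  exact tendsto_atTop_mono' atTop (eventually_atTop.2 ⟨n, hbound⟩) htend
end
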